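/- Let L ≥ 0 be an integer and let (α_t)_{t≥0} be any sequence of reals with 0 ≤ α_t ≤ 1 for all t. Let (Z_t)_{t≥0} be a sequence of nonnegative-integer-valued random variables on a probability space such that Z_0 = 0 almost surely and, for every t ≥ 0, conditionally on the σ-algebra generated by Z_0, …, Z_t: Z_{t+1} = Z_t + 1 with probability (1 + α_t)/4, Z_{t+1} = max(Z_t − 1, 0) with probability (1 + α_t)/4, and Z_{t+1} = Z_t with probability (1 − α_t)/2. Let T = min{t : Z_t = L} be the first hitting time of L. Then E[T] ≤ 2(L + 1)². -/

import Mathlib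

/-!
The function `g a = 2L(L+1) - 2a(a+1)` is nonnegative on `{0, …, L}` and satisfies
`g (a+1) + g (a-1) = 2 g a - 4`, also at `a = 0` where `a - 1` is truncated to `0`. So while the
chain is below `L`, one step lowers the conditional expectation of `g` by `1 + α_t ≥ 1`; and since
the chain climbs at most one unit per step, it is below `L` at every time before `T`. Summing the
drift inequality over time bounds `E[T] = ∑ₙ P(T > n)` by `g 0 = 2L(L+1) ≤ 2(L+1)²`.
-/

open MeasureTheory ProbabilityTheory
open scoped ENNReal

/-- One-step transition kernel of the auxiliary process `Z`: from state `a` the chain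
moves to `a + 1` with probability `(1 + α)/4`, to `max(a - 1, 0)` with probability
`(1 + α)/4`, and stays at `a` with probability `(1 - α)/2` (here `a - 1` is truncated
ℕ-subtraction, so at `a = 0` the probabilities of the coinciding outcomes add up). -/
noncomputable def stepKernel (α : ℝ) (a b : ℕ) : ℝ :=
  (if b = a + 1 then (1 + α) / 4 else 0) +
  (if b = a - 1 then (1 + α) / 4 else 0) +
  (if b = a then (1 - α) / 2 else 0)

theorem iInf_natCast_eq_tsum_indicator (p : ℕ → Prop) :
    ⨅ (t : ℕ) (_ : p t), (t : ℝ≥0∞) = ∑' n, {n | ∀ s ≤ n, ¬ p s}.indicator 1 n := by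
  rw [← tsum_subtype, Pi.one_def, ENNReal.tsum_set_one]
  by_cases h : ∃ t, p t
  · classical
    have hS : {n | ∀ s ≤ n, ¬ p s} = ↑(Finset.range (Nat.find h)) := by
      ext n; simp [Nat.lt_find_iff]
    rw [hS, Set.encard_coe_eq_coe_finsetCard, Finset.card_range]
    refine le_antisymm (iInf₂_le _ (Nat.find_spec h)) (le_iInf₂ fun t ht => ?_)
    exact_mod_cast Nat.find_min' h ht
  · rw [not_exists] at h
    simp [h]

theorem ENNReal.tsum_le_of_add_le {u m : ℕ → ℝ≥0∞} (h : ∀ n, u (n + 1) + m n ≤ u n) :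
    ∑' n, m n ≤ u 0 := by
  have partial_le : ∀ n, ∑ k ∈ Finset.range n, m k + u n ≤ u 0 := by
    intro n
    induction n with
    | zero => simp
    | succ n ih =>
      calc ∑ k ∈ Finset.range (n + 1), m k + u (n + 1)
          = ∑ k ∈ Finset.range n, m k + (u (n + 1) + m n) := by rw [Finset.sum_range_succ]; ring
        _ ≤ u 0 := le_trans (by gcongr; exact h n) ih
  rw [ENNReal.tsum_eq_iSup_nat]
  exact iSup_le fun n => le_trans le_self_add (partial_le n)

theorem lintegral_iInf_natCast_eq_tsum_measure {Ω : Type*} [MeasurableSpace Ω] (μ : Measure Ω)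
    {p : ℕ → Ω → Prop} (hp : ∀ t, MeasurableSet {ω | p t ω}) :
    ∫⁻ ω, ⨅ (t : ℕ) (_ : p t ω), (t : ℝ≥0∞) ∂μ = ∑' n, μ {ω | ∀ s ≤ n, ¬ p s ω} := by
  have hmeas : ∀ n, MeasurableSet {ω | ∀ s ≤ n, ¬ p s ω} := fun n => by
    simp only [Set.ofPred_forall]
    exact MeasurableSet.iInter fun s => MeasurableSet.iInter fun _ => (hp s).compl
  have hswap : ∀ ω n, {n | ∀ s ≤ n, ¬ p s ω}.indicator (1 : ℕ → ℝ≥0∞) n =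
      {ω | ∀ s ≤ n, ¬ p s ω}.indicator 1 ω := fun _ _ => rfl
  simp_rw [iInf_natCast_eq_tsum_indicator, hswap]
  rw [lintegral_tsum fun n => (measurable_one.indicator (hmeas n)).aemeasurable]
  exact tsum_congr fun n => lintegral_indicator_one (hmeas n)

theorem setLIntegral_preimage_eq_tsum {Ω β : Type*} [MeasurableSpace Ω] [MeasurableSpace β]
    [Countable β] [MeasurableSingletonClass β] (μ : Measure Ω) {h : Ω → β} (hh : Measurable h)
    (S : Set β) (f : Ω → ℝ≥0∞) :
    ∫⁻ ω in h ⁻¹' S, f ω ∂μ = ∑' b : S, ∫⁻ ω in h ⁻¹' {b.1}, f ω ∂μ := by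
  conv_lhs => rw [← Set.iUnion_of_singleton_coe S, Set.preimage_iUnion]
  refine lintegral_iUnion (fun b => hh (measurableSet_singleton _)) ?_ f
  intro b c hbc
  exact (Set.disjoint_singleton.2 (Subtype.coe_ne_coe.2 hbc)).preimage h

theorem setLIntegral_comp_eq_mul_tsum_cond {Ω β : Type*} [MeasurableSpace Ω] [MeasurableSpace β]
    [Countable β] [MeasurableSingletonClass β] {μ : Measure Ω} {Y : Ω → β} (hY : Measurable Y)
    {C : Set Ω} (hC : MeasurableSet C) (hCfin : μ C ≠ ∞) (f : β → ℝ≥0∞) :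
    ∫⁻ ω in C, f (Y ω) ∂μ = μ C * ∑' b, f b * μ[|C] (Y ⁻¹' {b}) := by
  rw [← lintegral_map (measurable_of_countable f) hY, lintegral_countable',
    ← ENNReal.tsum_mul_left]
  refine tsum_congr fun b => ?_
  rw [Measure.map_apply hY (measurableSet_singleton b),
    Measure.restrict_apply (hY (measurableSet_singleton b)), mul_left_comm, mul_comm (μ C),
    cond_mul_eq_inter' hC hCfin, Set.inter_comm]

namespace ProbabilityTheory

variable {Ω β : Type*}

def HasTransitionKernel [MeasurableSpace Ω] (μ : Measure Ω) (Z : ℕ → Ω → β)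
    (P : ℕ → β → β → ℝ≥0∞) : Prop :=
  ∀ (t : ℕ) (z : ℕ → β), μ {ω | ∀ s ≤ t, Z s ω = z s} ≠ 0 →
    ∀ b, μ[|{ω | ∀ s ≤ t, Z s ω = z s}] {ω | Z (t + 1) ω = b} = P t (z t) b

/-- The path up to time `n`; it takes countably many values, so integrals over events of the past
split into sums over the cylinders on which the transition hypothesis applies. -/
def history (Z : ℕ → Ω → β) (n : ℕ) (ω : Ω) : Fin (n + 1) → β := fun i => Z i ω

variable {Z : ℕ → Ω → β}

theorem measurable_history [MeasurableSpace Ω] [MeasurableSpace β] (hZ : ∀ t, Measurable (Z t))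
    (n : ℕ) : Measurable (history Z n) :=
  measurable_pi_lambda _ fun i => hZ i

theorem history_preimage_singleton (n : ℕ) (v : Fin (n + 1) → β) :
    history Z n ⁻¹' {v} = {ω | ∀ s ≤ n, Z s ω = v (Fin.clamp s n)} := by
  ext ω
  simp only [Set.mem_preimage, Set.mem_singleton_iff, funext_iff, Fin.forall_iff, history,
    Set.mem_ofPred_eq, Nat.lt_succ_iff]
  refine forall₂_congr fun s hs => ?_
  simp [Fin.clamp, min_eq_left hs]

theorem history_preimage_setOf_forall (n : ℕ) (A : Set β) :
    history Z n ⁻¹' {v | ∀ i, v i ∉ A} = {ω | ∀ s ≤ n, Z s ω ∉ A} := by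
  ext ω
  simp [history, Fin.forall_iff]

variable [MeasurableSpace Ω] [MeasurableSpace β] [Countable β] [MeasurableSingletonClass β]
  {μ : Measure Ω} {P : ℕ → β → β → ℝ≥0∞}

theorem HasTransitionKernel.setLIntegral_history_preimage [IsFiniteMeasure μ]
    (hZ : ∀ t, Measurable (Z t)) (hP : HasTransitionKernel μ Z P) (n : ℕ)
    (S : Set (Fin (n + 1) → β)) (f : β → β → ℝ≥0∞) :
    ∫⁻ ω in history Z n ⁻¹' S, f (Z n ω) (Z (n + 1) ω) ∂μ =
      ∫⁻ ω in history Z n ⁻¹' S, ∑' b, f (Z n ω) b * P n (Z n ω) b ∂μ := by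
  rw [setLIntegral_preimage_eq_tsum μ (measurable_history hZ n),
    setLIntegral_preimage_eq_tsum μ (measurable_history hZ n)]
  refine tsum_congr fun v => ?_
  set C := history Z n ⁻¹' {v.1}
  set a := v.1 (Fin.last n)
  have hC : MeasurableSet C := measurable_history hZ n (measurableSet_singleton _)
  have hZn : ∀ ω ∈ C, Z n ω = a := fun ω hω => (congrFun hω (Fin.last n) :)
  have hlhs : ∫⁻ ω in C, f (Z n ω) (Z (n + 1) ω) ∂μ = ∫⁻ ω in C, f a (Z (n + 1) ω) ∂μ :=
    setLIntegral_congr_fun hC fun ω hω => by simp only [hZn ω hω]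
  have hrhs : ∫⁻ ω in C, ∑' b, f (Z n ω) b * P n (Z n ω) b ∂μ =
      ∫⁻ _ in C, ∑' b, f a b * P n a b ∂μ :=
    setLIntegral_congr_fun hC fun ω hω => by simp only [hZn ω hω]
  rw [hlhs, hrhs, setLIntegral_comp_eq_mul_tsum_cond (hZ (n + 1)) hC (measure_ne_top μ C),
    setLIntegral_const, mul_comm _ (μ C)]
  rcases eq_or_ne (μ C) 0 with h0 | h0
  · simp [h0]
  · have hCz : C = {ω | ∀ s ≤ n, Z s ω = v.1 (Fin.clamp s n)} :=
      history_preimage_singleton n v.1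
    have hlast : Fin.clamp n n = Fin.last n := by ext; simp [Fin.clamp]
    rw [hCz] at h0 ⊢
    congr 2 with b
    exact congrArg (f a b * ·) ((hP n _ h0 b).trans (by rw [hlast]))

theorem HasTransitionKernel.ae_ne_zero [IsFiniteMeasure μ] (hZ : ∀ t, Measurable (Z t))
    (hP : HasTransitionKernel μ Z P) : ∀ᵐ ω ∂μ, ∀ t, P t (Z t ω) (Z (t + 1) ω) ≠ 0 := by
  refine ae_all_iff.2 fun t => ae_iff.2 ?_
  set bad := {ω | ¬ P t (Z t ω) (Z (t + 1) ω) ≠ 0}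
  have hbad : MeasurableSet bad :=
    (hZ t).prodMk (hZ (t + 1)) (Set.to_countable {p : β × β | ¬ P t p.1 p.2 ≠ 0}).measurableSet
  have htower := hP.setLIntegral_history_preimage hZ t Set.univ
    fun a b => if P t a b = 0 then 1 else 0
  have hzero : ∀ a b, (if P t a b = 0 then 1 else 0) * P t a b = 0 := fun a b => by
    split_ifs with h <;> simp [h]
  simp only [Set.preimage_univ, Measure.restrict_univ, hzero, tsum_zero, lintegral_zero] at htower
  rw [← lintegral_indicator_one hbad, ← htower]
  congr 1 with ω
  simp [bad, Set.indicator_apply]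

theorem HasTransitionKernel.setLIntegral_succ_add_measure_le [IsFiniteMeasure μ]
    (hZ : ∀ t, Measurable (Z t)) (hP : HasTransitionKernel μ Z P) {A : Set β} {V : β → ℝ≥0∞}
    (hV : ∀ᵐ ω ∂μ, ∀ n, (∀ s ≤ n, Z s ω ∉ A) → ∑' b, V b * P n (Z n ω) b + 1 ≤ V (Z n ω))
    (n : ℕ) :
    ∫⁻ ω in {ω | ∀ s ≤ n + 1, Z s ω ∉ A}, V (Z (n + 1) ω) ∂μ + μ {ω | ∀ s ≤ n, Z s ω ∉ A} ≤
      ∫⁻ ω in {ω | ∀ s ≤ n, Z s ω ∉ A}, V (Z n ω) ∂μ := by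
  set B := {ω | ∀ s ≤ n, Z s ω ∉ A}
  have hB : history Z n ⁻¹' {v | ∀ i, v i ∉ A} = B := history_preimage_setOf_forall n A
  have hBm : MeasurableSet B := hB ▸ measurable_history hZ n (Set.to_countable _).measurableSet
  have htower := hP.setLIntegral_history_preimage hZ n {v | ∀ i, v i ∉ A} fun _ b => V b
  rw [hB] at htower
  calc _ ≤ ∫⁻ ω in B, V (Z (n + 1) ω) ∂μ + μ B := by
        gcongr
        exact fun ω hω s hs => hω s (by omega)
    _ = ∫⁻ ω in B, (∑' b, V b * P n (Z n ω) b + 1) ∂μ := by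
        rw [lintegral_add_right _ measurable_const, setLIntegral_one, htower]
    _ ≤ ∫⁻ ω in B, V (Z n ω) ∂μ :=
        lintegral_mono_ae ((ae_restrict_iff' hBm).2 (hV.mono fun ω h hω => h n hω))

theorem HasTransitionKernel.lintegral_hittingTime_le_of_drift [IsFiniteMeasure μ]
    (hZ : ∀ t, Measurable (Z t)) (hP : HasTransitionKernel μ Z P) {A : Set β} {V : β → ℝ≥0∞}
    (hV : ∀ᵐ ω ∂μ, ∀ n, (∀ s ≤ n, Z s ω ∉ A) → ∑' b, V b * P n (Z n ω) b + 1 ≤ V (Z n ω)) :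
    ∫⁻ ω, ⨅ (t : ℕ) (_ : Z t ω ∈ A), (t : ℝ≥0∞) ∂μ ≤ ∫⁻ ω, V (Z 0 ω) ∂μ := by
  rw [lintegral_iInf_natCast_eq_tsum_measure μ fun t => hZ t (Set.to_countable A).measurableSet]
  calc ∑' n, μ {ω | ∀ s ≤ n, Z s ω ∉ A} ≤ ∫⁻ ω in {ω | ∀ s ≤ 0, Z s ω ∉ A}, V (Z 0 ω) ∂μ :=
        ENNReal.tsum_le_of_add_le (hP.setLIntegral_succ_add_measure_le hZ hV)
    _ ≤ ∫⁻ ω, V (Z 0 ω) ∂μ := setLIntegral_le_lintegral _ _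

end ProbabilityTheory

theorem stepKernel_eq_zero_of_add_one_lt {α : ℝ} {a b : ℕ} (h : a + 1 < b) :
    stepKernel α a b = 0 := by
  simp [stepKernel, show b ≠ a + 1 by omega, show b ≠ a - 1 by omega, show b ≠ a by omega]

theorem tsum_mul_ofReal_stepKernel {α : ℝ} (h₁ : -1 ≤ α) (h₂ : α ≤ 1) (a : ℕ) (f : ℕ → ℝ≥0∞) :
    ∑' b, f b * ENNReal.ofReal (stepKernel α a b) =
      (f (a + 1) + f (a - 1)) * ENNReal.ofReal ((1 + α) / 4) +
        f a * ENNReal.ofReal ((1 - α) / 2) := by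
  have hp : 0 ≤ (1 + α) / 4 := by linarith
  have hq : 0 ≤ (1 - α) / 2 := by linarith
  have hsplit : ∀ b, ENNReal.ofReal (stepKernel α a b) =
      (if b = a + 1 then ENNReal.ofReal ((1 + α) / 4) else 0) +
      (if b = a - 1 then ENNReal.ofReal ((1 + α) / 4) else 0) +
      (if b = a then ENNReal.ofReal ((1 - α) / 2) else 0) := fun b => by
    rw [stepKernel, ENNReal.ofReal_add (by positivity) (by positivity),
      ENNReal.ofReal_add (by positivity) (by positivity)]
    simp only [apply_ite ENNReal.ofReal, ENNReal.ofReal_zero]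
  simp only [hsplit, mul_add, mul_ite, mul_zero]
  rw [ENNReal.tsum_add, ENNReal.tsum_add, tsum_ite_eq, tsum_ite_eq, tsum_ite_eq, add_mul]

def quadraticLyapunov (L : ℕ) (x : ℝ) : ℝ := 2 * L * (L + 1) - 2 * x * (x + 1)

theorem quadraticLyapunov_nonneg {L b : ℕ} (hb : b ≤ L) : 0 ≤ quadraticLyapunov L b := by
  have : (b : ℝ) ≤ L := by exact_mod_cast hb
  unfold quadraticLyapunov
  nlinarith

theorem quadraticLyapunov_add_one_add_sub_one (L a : ℕ) :
    quadraticLyapunov L (a + 1 : ℕ) + quadraticLyapunov L (a - 1 : ℕ) =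
      2 * quadraticLyapunov L a - 4 := by
  rcases a with _ | a <;> simp [quadraticLyapunov] <;> ring

theorem tsum_quadraticLyapunov_mul_stepKernel_add_one_le {α : ℝ} (h₁ : 0 ≤ α) (h₂ : α ≤ 1)
    {L a : ℕ} (ha : a < L) :
    ∑' b : ℕ, ENNReal.ofReal (quadraticLyapunov L b) * ENNReal.ofReal (stepKernel α a b) + 1 ≤
      ENNReal.ofReal (quadraticLyapunov L a) := by
  have hup := quadraticLyapunov_nonneg (L := L) (b := a + 1) ha
  have hdown := quadraticLyapunov_nonneg (L := L) (b := a - 1) (by omega)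
  have hstay := quadraticLyapunov_nonneg ha.le
  have hp : 0 ≤ (1 + α) / 4 := by linarith
  have hq : 0 ≤ (1 - α) / 2 := by linarith
  rw [tsum_mul_ofReal_stepKernel (by linarith) h₂, ← ENNReal.ofReal_add hup hdown,
    ← ENNReal.ofReal_mul (add_nonneg hup hdown), ← ENNReal.ofReal_mul hstay,
    ← ENNReal.ofReal_add (by positivity) (by positivity), ← ENNReal.ofReal_one,
    ← ENNReal.ofReal_add (by positivity) zero_le_one, quadraticLyapunov_add_one_add_sub_one]
  exact ENNReal.ofReal_le_ofReal (by nlinarith)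

theorem Nat.lt_of_forall_ne_of_le_add_one {z : ℕ → ℕ} {L n : ℕ} (h0 : z 0 ≤ L)
    (hstep : ∀ t, z (t + 1) ≤ z t + 1) (hne : ∀ s ≤ n, z s ≠ L) : z n < L := by
  induction n with
  | zero => exact lt_of_le_of_ne h0 (hne 0 le_rfl)
  | succ n ih =>
    have hlt := ih fun s hs => hne s (by omega)
    exact lt_of_le_of_ne (by have := hstep n; omega) (hne (n + 1) le_rfl)

/-- Let `L ≥ 0` and let `(α_t)` be reals in `[0,1]`. Let `(Z_t)` be
ℕ-valued random variables with `Z_0 = 0` a.s. such that, conditionally on the history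
`Z_0 = z_0, …, Z_t = z_t`, the next state `Z_{t+1}` equals `z_t + 1` with probability
`(1 + α_t)/4`, `max(z_t - 1, 0)` with probability `(1 + α_t)/4`, and `z_t` with
probability `(1 - α_t)/2`. Then the first hitting time `T = min{t : Z_t = L}` satisfies
`E[T] ≤ 2(L + 1)²` (in particular `T` is a.s. finite). -/
theorem hitting_time_expectation_le
    {Ω : Type*} [MeasurableSpace Ω] (μ : Measure Ω) [IsProbabilityMeasure μ]
    (L : ℕ) (α : ℕ → ℝ) (hα : ∀ t, 0 ≤ α t ∧ α t ≤ 1)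
    (Z : ℕ → Ω → ℕ) (hZmeas : ∀ t, Measurable (Z t))
    (hZ0 : ∀ᵐ ω ∂μ, Z 0 ω = 0)
    (hstep : ∀ (t : ℕ) (z : ℕ → ℕ),
      μ {ω | ∀ s ≤ t, Z s ω = z s} ≠ 0 →
      ∀ b : ℕ,
        μ[|{ω | ∀ s ≤ t, Z s ω = z s}] {ω | Z (t + 1) ω = b} =
          ENNReal.ofReal (stepKernel (α t) (z t) b)) :
    ∫⁻ ω, (⨅ (t : ℕ) (_ : Z t ω = L), (t : ℝ≥0∞)) ∂μ ≤
      ENNReal.ofReal (2 * ((L : ℝ) + 1) ^ 2) := by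
  have hP : HasTransitionKernel μ Z fun t a b => ENNReal.ofReal (stepKernel (α t) a b) := hstep
  have hdrift : ∀ᵐ ω ∂μ, ∀ n, (∀ s ≤ n, Z s ω ∉ ({L} : Set ℕ)) →
      ∑' b : ℕ, ENNReal.ofReal (quadraticLyapunov L b) *
          ENNReal.ofReal (stepKernel (α n) (Z n ω) b) + 1 ≤
        ENNReal.ofReal (quadraticLyapunov L (Z n ω)) := by
    filter_upwards [hZ0, hP.ae_ne_zero hZmeas] with ω h0 hsupp n hn
    refine tsum_quadraticLyapunov_mul_stepKernel_add_one_le (hα n).1 (hα n).2 ?_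
    refine Nat.lt_of_forall_ne_of_le_add_one (by omega) (fun t => ?_) hn
    by_contra! h
    exact hsupp t (by rw [stepKernel_eq_zero_of_add_one_lt h, ENNReal.ofReal_zero])
  calc ∫⁻ ω, (⨅ (t : ℕ) (_ : Z t ω = L), (t : ℝ≥0∞)) ∂μ
      ≤ ∫⁻ ω, ENNReal.ofReal (quadraticLyapunov L (Z 0 ω)) ∂μ :=
        hP.lintegral_hittingTime_le_of_drift hZmeas hdrift
    _ = ENNReal.ofReal (quadraticLyapunov L 0) := by
        rw [lintegral_congr_ae (hZ0.mono fun ω h => by rw [h]), lintegral_const, measure_univ,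
          mul_one, Nat.cast_zero]
    _ ≤ ENNReal.ofReal (2 * ((L : ℝ) + 1) ^ 2) :=
        ENNReal.ofReal_le_ofReal (by unfold quadraticLyapunov; nlinarith)
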